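/- arXiv:2303.15723 — 4 statements merged into one kernel-verified Lean document; each statement's English description precedes it below -/
import Mathlib

section
/- Let Θ be a finite set of states with n := |Θ| ≥ 2, let 𝓔 be a set of experiments, and let C : 𝓔 × Δ(Θ) → [0,∞] be a cost functional. Suppose Assumption (A) holds: there exist ε > 0, η > 0 and T ≥ 0 such that for every μ ∈ Δ(Θ) with ‖μ − (1/n, …, 1/n)‖ < η there exists an experiment E_μ ∈ 𝓔 with Υ(E_μ, μ) > ε and C(E_μ, μ) ≤ T. Then there exist u > 0 and d > 0 such that: (i) for every μ ∈ Δ(Θ), max( u − d·min_θ μ(θ), sup_{E=(S,χ)∈𝓔} ( u − d·Σ_{s∈S} min_θ (μ(θ)·χ(θ)(s)) − C(E, μ) ) ) ≥ 0 (every informed Bob accepts the contract, possibly after acquiring information); and (ii) for every σ ∈ Δ(Θ), min_θ (u − d·σ(θ)) ≤ u − d/n < 0 (the uninformed, maxmin-evaluating Bob strictly prefers to reject no matter how he randomizes his announcement). -/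
open scoped BigOperators ENNReal

/-- A statistical experiment: a finite nonempty signal set (modeled as `Fin k` with `0 < k`)
together with a stochastic map `χ` from states to distributions over signals. -/
structure Experiment (Θ : Type) [Fintype Θ] where
  k : ℕ
  k_pos : 0 < k
  χ : Θ → Fin k → ℝ
  χ_nonneg : ∀ θ s, 0 ≤ χ θ s
  χ_sum : ∀ θ, ∑ s, χ θ s = 1

/-- `μ` is a probability vector on the finite set `Θ`. -/
def IsDist {Θ : Type} [Fintype Θ] (μ : Θ → ℝ) : Prop :=
  (∀ θ, 0 ≤ μ θ) ∧ ∑ θ, μ θ = 1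

/-- Euclidean distance between two vectors indexed by `Θ`. -/
noncomputable def euclDist {Θ : Type} [Fintype Θ] (μ ν : Θ → ℝ) : ℝ :=
  Real.sqrt (∑ θ, (μ θ - ν θ) ^ 2)

/-- `Υ(E, μ) = min_θ μ(θ) − Σ_s min_θ (μ(θ)·χ(θ)(s))`. -/
noncomputable def Upsilon {Θ : Type} [Fintype Θ] (E : Experiment Θ) (μ : Θ → ℝ) : ℝ :=
  (⨅ θ, μ θ) - ∑ s, ⨅ θ, μ θ * E.χ θ s

/-!
Take `δ = min(ε, η / (√n (n - 1)), 1/n)`. If the least likely state of a prior `μ` has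
probability above `1/n - δ`, every coordinate of `μ` is within `(n - 1) δ` of `1/n`, so `μ` is
within `η` of the uniform prior and Assumption (A) gives an experiment of cost at most `T` whose
expected penalty is below `1/n - ε`. Either way the informed Bob can bring his expected penalty
down to `1/n - δ` at cost at most `T`. With `d = 2 (T + 1) / δ` and `u = d/n - (T + 1)` he keeps a
margin of `T + 1`, whereas the uninformed Bob's mixed announcement gives some state weight at
least `1/n`, leaving him at most `u - d/n = -(T + 1)`.
-/

open Finset

section

variable {Θ : Type} [Fintype Θ]

lemma euclDist_le_sqrt_card_mul {μ ν : Θ → ℝ} {r : ℝ} (hr : 0 ≤ r)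
    (h : ∀ θ, |μ θ - ν θ| ≤ r) :
    euclDist μ ν ≤ Real.sqrt (Fintype.card Θ) * r := by
  have hsum : ∑ θ, (μ θ - ν θ) ^ 2 ≤ ∑ _θ : Θ, r ^ 2 :=
    sum_le_sum fun θ _ => sq_le_sq' (abs_le.mp (h θ)).1 (abs_le.mp (h θ)).2
  rw [sum_const, card_univ, nsmul_eq_mul] at hsum
  calc euclDist μ ν ≤ Real.sqrt (Fintype.card Θ * r ^ 2) := Real.sqrt_le_sqrt hsum
    _ = Real.sqrt (Fintype.card Θ) * r := by
      rw [Real.sqrt_mul (Nat.cast_nonneg _), Real.sqrt_sq hr]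

namespace IsDist

variable {μ : Θ → ℝ}

lemma nonempty (hμ : IsDist μ) : Nonempty Θ := by
  by_contra h
  simpa [not_nonempty_iff.mp h] using hμ.2

lemma card_pos (hμ : IsDist μ) : (0 : ℝ) < Fintype.card Θ :=
  have := hμ.nonempty
  Nat.cast_pos.mpr Fintype.card_pos

lemma iInf_le_inv_card (hμ : IsDist μ) : (⨅ θ, μ θ) ≤ 1 / (Fintype.card Θ : ℝ) := by
  have h : Fintype.card Θ • (⨅ θ, μ θ) ≤ ∑ θ, μ θ :=
    card_nsmul_le_sum _ _ _ fun θ _ => Finite.ciInf_le μ θ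
  rw [nsmul_eq_mul, hμ.2] at h
  rw [le_div_iff₀ hμ.card_pos]
  linarith

lemma exists_inv_card_le (hμ : IsDist μ) : ∃ θ, 1 / (Fintype.card Θ : ℝ) ≤ μ θ := by
  have := hμ.nonempty
  have h : ∑ _θ : Θ, 1 / (Fintype.card Θ : ℝ) ≤ ∑ θ, μ θ := by
    rw [sum_const, card_univ, nsmul_eq_mul, hμ.2, mul_one_div_cancel hμ.card_pos.ne']
  obtain ⟨θ, -, hθ⟩ := exists_le_of_sum_le univ_nonempty h
  exact ⟨θ, hθ⟩

/-- Every coordinate exceeds the minimum `m`, so `μ θ - m ≤ ∑ θ', (μ θ' - m) = 1 - n m`. -/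
lemma abs_sub_inv_card_le (hn : 2 ≤ Fintype.card Θ) (hμ : IsDist μ) (θ : Θ) :
    |μ θ - 1 / (Fintype.card Θ : ℝ)| ≤
      ((Fintype.card Θ : ℝ) - 1) * (1 / (Fintype.card Θ : ℝ) - ⨅ θ', μ θ') := by
  have hn' : (2 : ℝ) ≤ Fintype.card Θ := by exact_mod_cast hn
  set n : ℝ := (Fintype.card Θ : ℝ)
  set m := ⨅ θ', μ θ'
  have hm : m ≤ 1 / n := hμ.iInf_le_inv_card
  have hmθ : m ≤ μ θ := Finite.ciInf_le μ θ
  have hsum : ∑ θ', (μ θ' - m) = 1 - n * m := by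
    rw [sum_sub_distrib, hμ.2, sum_const, card_univ, nsmul_eq_mul]
  have hle : μ θ - m ≤ 1 - n * m :=
    hsum ▸ single_le_sum (fun θ' _ => sub_nonneg.mpr (Finite.ciInf_le μ θ')) (mem_univ θ)
  have hn_inv : n * (1 / n) = 1 := mul_one_div_cancel (by positivity)
  rw [abs_le]
  constructor <;> nlinarith

lemma euclDist_uniform_le (hn : 2 ≤ Fintype.card Θ) (hμ : IsDist μ) :
    euclDist μ (fun _ => 1 / (Fintype.card Θ : ℝ)) ≤ Real.sqrt (Fintype.card Θ) *
      (((Fintype.card Θ : ℝ) - 1) * (1 / (Fintype.card Θ : ℝ) - ⨅ θ, μ θ)) := by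
  have hn' : (1 : ℝ) ≤ (Fintype.card Θ : ℝ) - 1 := by
    rw [le_sub_iff_add_le]; exact_mod_cast hn
  exact euclDist_le_sqrt_card_mul
    (mul_nonneg (by linarith) (sub_nonneg.mpr hμ.iInf_le_inv_card)) (hμ.abs_sub_inv_card_le hn)

end IsDist

lemma exists_penalty_le_inv_card_sub {ℰ : Set (Experiment Θ)} {C : Experiment Θ → (Θ → ℝ) → ℝ≥0∞}
    {ε η T : ℝ} (hn : 2 ≤ Fintype.card Θ) (hε : 0 < ε) (hη : 0 < η)
    (hA : ∀ μ : Θ → ℝ, IsDist μ → euclDist μ (fun _ => 1 / (Fintype.card Θ : ℝ)) < η →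
      ∃ E ∈ ℰ, Upsilon E μ > ε ∧ C E μ ≤ ENNReal.ofReal T) :
    ∃ δ > 0, δ ≤ 1 / (Fintype.card Θ : ℝ) ∧ ∀ μ : Θ → ℝ, IsDist μ →
      (⨅ θ, μ θ) ≤ 1 / (Fintype.card Θ : ℝ) - δ ∨
      ∃ E ∈ ℰ, C E μ ≤ ENNReal.ofReal T ∧
        ∑ s, ⨅ θ, μ θ * E.χ θ s ≤ 1 / (Fintype.card Θ : ℝ) - δ := by
  have hn' : (2 : ℝ) ≤ Fintype.card Θ := by exact_mod_cast hn
  set n : ℝ := (Fintype.card Θ : ℝ)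
  have hK : 0 < Real.sqrt n * (n - 1) := mul_pos (Real.sqrt_pos.mpr (by linarith)) (by linarith)
  set δ := min (min ε (η / (Real.sqrt n * (n - 1)))) (1 / n)
  have hδε : δ ≤ ε := (min_le_left _ _).trans (min_le_left _ _)
  have hδη : δ ≤ η / (Real.sqrt n * (n - 1)) := (min_le_left _ _).trans (min_le_right _ _)
  refine ⟨δ, by positivity, min_le_right _ _, fun μ hμ => ?_⟩
  by_cases hfar : (⨅ θ, μ θ) ≤ 1 / n - δ
  · exact Or.inl hfar
  have hclose : euclDist μ (fun _ => 1 / n) < η :=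
    calc euclDist μ (fun _ => 1 / n) ≤ Real.sqrt n * ((n - 1) * (1 / n - ⨅ θ, μ θ)) :=
          hμ.euclDist_uniform_le hn
      _ < Real.sqrt n * (n - 1) * (η / (Real.sqrt n * (n - 1))) := by
          rw [← mul_assoc]; exact mul_lt_mul_of_pos_left (by linarith) hK
      _ = η := mul_div_cancel₀ _ hK.ne'
  obtain ⟨E, hE, hΥ, hC⟩ := hA μ hμ hclose
  refine Or.inr ⟨E, hE, hC, ?_⟩
  unfold Upsilon at hΥ
  linarith [hμ.iInf_le_inv_card]

end

/-- Under Assumption (A) there is a contract `(u, d)` that screens the uninformed Bob: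
(i) every informed Bob accepts (either without learning, or via some affordable experiment);
(ii) the maxmin uninformed Bob gets at most `u − d/n < 0` from any mixed announcement. -/
theorem screening_contract_exists
    {Θ : Type} [Fintype Θ] (hn : 2 ≤ Fintype.card Θ)
    (ℰ : Set (Experiment Θ)) (C : Experiment Θ → (Θ → ℝ) → ℝ≥0∞)
    (hA : ∃ ε > (0 : ℝ), ∃ η > (0 : ℝ), ∃ T : ℝ, 0 ≤ T ∧
      ∀ μ : Θ → ℝ, IsDist μ →
        euclDist μ (fun _ => 1 / (Fintype.card Θ : ℝ)) < η →
        ∃ E ∈ ℰ, Upsilon E μ > ε ∧ C E μ ≤ ENNReal.ofReal T) :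
    ∃ u > (0 : ℝ), ∃ d > (0 : ℝ),
      (∀ μ : Θ → ℝ, IsDist μ →
        (0 ≤ u - d * ⨅ θ, μ θ) ∨
        (∃ E ∈ ℰ, C E μ ≠ ⊤ ∧
          0 ≤ u - d * (∑ s, ⨅ θ, μ θ * E.χ θ s) - (C E μ).toReal)) ∧
      (∀ σ : Θ → ℝ, IsDist σ →
        (⨅ θ, u - d * σ θ) ≤ u - d / (Fintype.card Θ : ℝ)) ∧
      u - d / (Fintype.card Θ : ℝ) < 0 := by
  obtain ⟨ε, hε, η, hη, T, hT, hA⟩ := hA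
  obtain ⟨δ, hδ, hδn, hpenalty⟩ := exists_penalty_le_inv_card_sub hn hε hη hA
  set n : ℝ := (Fintype.card Θ : ℝ)
  set d := 2 * (T + 1) / δ
  have hd : 0 < d := by positivity
  have hdδ : d * δ = 2 * (T + 1) := div_mul_cancel₀ _ hδ.ne'
  have hdn : d * δ ≤ d / n := by
    simpa only [mul_one_div] using mul_le_mul_of_nonneg_left hδn hd.le
  set u := d / n - (T + 1)
  have hmargin : ∀ p, p ≤ 1 / n - δ → T + 1 ≤ u - d * p := fun p hp => by
    have := mul_le_mul_of_nonneg_left hp hd.le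
    rw [mul_sub, mul_one_div] at this
    linarith
  refine ⟨u, by linarith, d, hd, fun μ hμ => ?_, fun σ hσ => ?_, by linarith⟩
  · rcases hpenalty μ hμ with hmin | ⟨E, hE, hC, hS⟩
    · exact Or.inl (by linarith [hmargin _ hmin])
    · refine Or.inr ⟨E, hE, ne_top_of_le_ne_top ENNReal.ofReal_ne_top hC, ?_⟩
      linarith [hmargin _ hS, ENNReal.toReal_le_of_le_ofReal hT hC]
  · obtain ⟨θ, hθ⟩ := hσ.exists_inv_card_le
    have := mul_le_mul_of_nonneg_left hθ hd.le
    rw [mul_one_div] at this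
    exact (Finite.ciInf_le _ θ).trans (by linarith)
end

section
/- Let M be a nonempty compact topological (metrizable) space of messages and t : M × {0, 1} → ℝ a continuous transfer function, and define the informed value function V(x) := max_{m ∈ M} ( x·t(m, 1) + (1 − x)·t(m, 0) ) for x ∈ [0, 1]. If V(x) ≥ 0 for every x ∈ [0, 1] (an informed expected-utility Bob accepts the contract no matter his prior), then there exists a Borel probability measure σ on M such that ∫_M t(m, θ) dσ(m) ≥ 0 for both θ ∈ {0, 1}; hence the maxmin-evaluating uninformed Bob, who evaluates a mixed message σ by min_θ ∫ t(m, θ) dσ(m), also weakly prefers to accept. -/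
/-!
For each prior `x` some message `m` gives the informed Bob a nonnegative payoff
`x t(m,1) + (1-x) t(m,0)`, and then `t(m,0) ≥ 0` or `t(m,1) ≥ 0`. The priors admitting such
an `m` with `t(m,θ) ≥ 0` form a closed set `B θ` (a projection along the compact factor `M`),
`0 ∈ B 0`, `1 ∈ B 1` and `B 0 ∪ B 1 ⊇ [0,1]`, so by connectedness some prior `x` lies in both.
The two witnessing messages then have payoff vectors in the half-plane `x v + (1-x) u ≥ 0`,
one with `u ≥ 0` and one with `v ≥ 0`, and a suitable mixture of them lies in the nonnegative
quadrant.
-/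

open MeasureTheory Set

theorem nonneg_or_nonneg_of_convexComb_nonneg {x a b : ℝ} (hx : x ∈ Icc (0 : ℝ) 1)
    (h : 0 ≤ x * b + (1 - x) * a) : 0 ≤ a ∨ 0 ≤ b := by
  by_contra! hab
  obtain ⟨ha, hb⟩ := hab
  nlinarith [mul_nonneg hx.1 (neg_nonneg.2 hb.le),
    mul_nonneg (sub_nonneg.2 hx.2) (neg_nonneg.2 ha.le)]

theorem exists_convexComb_nonneg {x a b c d : ℝ} (hx : x ∈ Icc (0 : ℝ) 1)
    (hab : 0 ≤ x * b + (1 - x) * a) (ha : 0 ≤ a) (hcd : 0 ≤ x * d + (1 - x) * c) (hd : 0 ≤ d) :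
    ∃ p ∈ Icc (0 : ℝ) 1, 0 ≤ p * a + (1 - p) * c ∧ 0 ≤ p * b + (1 - p) * d := by
  rcases le_or_gt 0 b with hb | hb
  · exact ⟨1, right_mem_Icc.2 zero_le_one, by simpa using ha, by simpa using hb⟩
  rcases le_or_gt 0 c with hc | hc
  · exact ⟨0, left_mem_Icc.2 zero_le_one, by simpa using hc, by simpa using hd⟩
  obtain ⟨hx0, hx1⟩ := hx
  have hxpos : 0 < x := lt_of_le_of_ne hx0 fun h => by subst h; linarith
  have hac : 0 < a - c := by linarith
  -- `p` is where the segment crosses the axis `u = 0`; there the half-plane forces `v ≥ 0`.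
  set p := -c / (a - c) with hp
  have hp0 : 0 ≤ p := div_nonneg (by linarith) hac.le
  have hp1 : p ≤ 1 := (div_le_one hac).2 (by linarith)
  have hu : p * a + (1 - p) * c = 0 := by rw [hp]; field_simp; ring
  have hmix : 0 ≤ x * (p * b + (1 - p) * d) + (1 - x) * (p * a + (1 - p) * c) := by
    nlinarith [mul_nonneg hp0 hab, mul_nonneg (sub_nonneg.2 hp1) hcd]
  rw [hu, mul_zero, add_zero] at hmix
  exact ⟨p, ⟨hp0, hp1⟩, hu.ge, nonneg_of_mul_nonneg_right hmix hxpos⟩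

theorem exists_le_apply_of_le_iSup {M : Type*} [TopologicalSpace M] [CompactSpace M]
    [Nonempty M] {f : M → ℝ} (hf : Continuous f) {c : ℝ} (h : c ≤ ⨆ m, f m) : ∃ m, c ≤ f m := by
  obtain ⟨m, -, hm⟩ := isCompact_univ.exists_isMaxOn univ_nonempty hf.continuousOn
  exact ⟨m, h.trans (ciSup_le fun m' => hm (mem_univ m'))⟩

section Mixture

variable {α : Type*} [MeasurableSpace α]

noncomputable def twoPointMixture (p : ℝ) (a b : α) : Measure α :=
  ENNReal.ofReal p • Measure.dirac a + ENNReal.ofReal (1 - p) • Measure.dirac b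

theorem isProbabilityMeasure_twoPointMixture {p : ℝ} (hp : p ∈ Icc (0 : ℝ) 1) (a b : α) :
    IsProbabilityMeasure (twoPointMixture p a b) := by
  constructor
  rw [twoPointMixture, Measure.add_apply, Measure.smul_apply, Measure.smul_apply,
    measure_univ, measure_univ, smul_eq_mul, smul_eq_mul, mul_one, mul_one,
    ← ENNReal.ofReal_add hp.1 (sub_nonneg.2 hp.2), add_sub_cancel, ENNReal.ofReal_one]

theorem integral_twoPointMixture {p : ℝ} (hp : p ∈ Icc (0 : ℝ) 1) (a b : α) {f : α → ℝ}
    (hf : Measurable f) :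
    ∫ y, f y ∂twoPointMixture p a b = p * f a + (1 - p) * f b := by
  have hint : ∀ (c : ℝ) (y : α), Integrable f (ENNReal.ofReal c • Measure.dirac y) := fun c y =>
    (integrable_dirac' hf.stronglyMeasurable enorm_lt_top).smul_measure ENNReal.ofReal_ne_top
  rw [twoPointMixture, integral_add_measure (hint _ _) (hint _ _), integral_smul_measure,
    integral_smul_measure, integral_dirac' _ _ hf.stronglyMeasurable,
    integral_dirac' _ _ hf.stronglyMeasurable, ENNReal.toReal_ofReal hp.1,
    ENNReal.toReal_ofReal (sub_nonneg.2 hp.2), smul_eq_mul, smul_eq_mul]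

end Mixture

section Contract

variable {M : Type*} (t : M → Fin 2 → ℝ)

def informedPayoff (x : ℝ) (m : M) : ℝ := x * t m 1 + (1 - x) * t m 0

def acceptablePriors (θ : Fin 2) : Set ℝ :=
  Prod.fst '' {q : ℝ × M | 0 ≤ informedPayoff t q.1 q.2 ∧ 0 ≤ t q.2 θ}

variable {t}

theorem isClosed_acceptablePriors [TopologicalSpace M] [CompactSpace M]
    (ht : ∀ θ, Continuous fun m => t m θ) (θ : Fin 2) : IsClosed (acceptablePriors t θ) := by
  have hpay : Continuous fun q : ℝ × M => informedPayoff t q.1 q.2 :=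
    (continuous_fst.mul ((ht 1).comp continuous_snd)).add
      ((continuous_const.sub continuous_fst).mul ((ht 0).comp continuous_snd))
  exact isClosedMap_fst_of_compactSpace _
    ((isClosed_le continuous_const hpay).inter (isClosed_le continuous_const
      ((ht θ).comp continuous_snd)))

theorem mem_acceptablePriors_of_informedPayoff_nonneg {x : ℝ} {m : M}
    (hx : x ∈ Icc (0 : ℝ) 1) (hm : 0 ≤ informedPayoff t x m) :
    x ∈ acceptablePriors t 0 ∪ acceptablePriors t 1 :=
  (nonneg_or_nonneg_of_convexComb_nonneg hx hm).imp (fun h => ⟨(x, m), ⟨hm, h⟩, rfl⟩)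
    fun h => ⟨(x, m), ⟨hm, h⟩, rfl⟩

theorem exists_mem_acceptablePriors_inter [TopologicalSpace M] [CompactSpace M] [Nonempty M]
    (ht : ∀ θ, Continuous fun m => t m θ)
    (hV : ∀ x ∈ Icc (0 : ℝ) 1, 0 ≤ ⨆ m, informedPayoff t x m) :
    ∃ x ∈ Icc (0 : ℝ) 1, x ∈ acceptablePriors t 0 ∧ x ∈ acceptablePriors t 1 := by
  have hacc : ∀ x ∈ Icc (0 : ℝ) 1, ∃ m, 0 ≤ informedPayoff t x m := fun x hx =>
    exists_le_apply_of_le_iSup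
      ((continuous_const.mul (ht 1)).add (continuous_const.mul (ht 0))) (hV x hx)
  have hzero : (0 : ℝ) ∈ acceptablePriors t 0 := by
    obtain ⟨m, hm⟩ := hacc 0 (left_mem_Icc.2 zero_le_one)
    exact ⟨(0, m), ⟨hm, by simpa [informedPayoff] using hm⟩, rfl⟩
  have hone : (1 : ℝ) ∈ acceptablePriors t 1 := by
    obtain ⟨m, hm⟩ := hacc 1 (right_mem_Icc.2 zero_le_one)
    exact ⟨(1, m), ⟨hm, by simpa [informedPayoff] using hm⟩, rfl⟩
  exact isPreconnected_closed_iff.1 isPreconnected_Icc _ _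
    (isClosed_acceptablePriors ht 0) (isClosed_acceptablePriors ht 1)
    (fun x hx => (hacc x hx).elim fun _ hm => mem_acceptablePriors_of_informedPayoff_nonneg hx hm)
    ⟨0, left_mem_Icc.2 zero_le_one, hzero⟩ ⟨1, right_mem_Icc.2 zero_le_one, hone⟩

end Contract

theorem general_contract_cannot_screen_general
    {M : Type} [TopologicalSpace M] [CompactSpace M] [Nonempty M]
    [MeasurableSpace M] [BorelSpace M]
    (t : M → Fin 2 → ℝ) (ht : ∀ θ : Fin 2, Continuous fun m => t m θ)
    (hV : ∀ x ∈ Set.Icc (0 : ℝ) 1, 0 ≤ ⨆ m, (x * t m 1 + (1 - x) * t m 0)) :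
    ∃ σ : Measure M, IsProbabilityMeasure σ ∧ ∀ θ : Fin 2, 0 ≤ ∫ m, t m θ ∂σ := by
  obtain ⟨x, hx, ⟨⟨_, m₀⟩, ⟨hpay₀, h₀⟩, rfl⟩, ⟨⟨_, m₁⟩, ⟨hpay₁, h₁⟩, rfl⟩⟩ :=
    exists_mem_acceptablePriors_inter ht hV
  obtain ⟨p, hp, hmix₀, hmix₁⟩ := exists_convexComb_nonneg hx hpay₀ h₀ hpay₁ h₁
  refine ⟨twoPointMixture p m₀ m₁, isProbabilityMeasure_twoPointMixture hp m₀ m₁, fun θ => ?_⟩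
  rw [integral_twoPointMixture hp m₀ m₁ (ht θ).measurable]
  fin_cases θ
  · exact hmix₀
  · exact hmix₁

/-- For a general contract `(M, t)` with two states: if the informed expected-utility Bob's
value function `V(x) = max_m (x·t(m,1) + (1−x)·t(m,0))` is nonnegative on all of `[0,1]`,
then there is a mixed message (a Borel probability measure `σ` on `M`) whose expected
transfer is nonnegative in both states, so the maxmin uninformed Bob also weakly accepts. -/
theorem general_contract_cannot_screen
    {M : Type} [TopologicalSpace M] [CompactSpace M] [Nonempty M]
    [TopologicalSpace.MetrizableSpace M] [MeasurableSpace M] [BorelSpace M]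
    (t : M → Fin 2 → ℝ) (ht : ∀ θ : Fin 2, Continuous fun m => t m θ)
    (hV : ∀ x ∈ Set.Icc (0 : ℝ) 1, 0 ≤ ⨆ m, (x * t m 1 + (1 - x) * t m 0)) :
    ∃ σ : Measure M, IsProbabilityMeasure σ ∧ ∀ θ : Fin 2, 0 ≤ ∫ m, t m θ ∂σ :=
  general_contract_cannot_screen_general t ht hV
end

section
/- Let c : [0,1] → ℝ be convex, continuous, and differentiable at 1/2, and let d > 0, κ > 0, and set u = d/2. Define, for each μ ∈ [0,1], V*(μ) := sup over finitely supported probability distributions F on [0,1] with mean μ of ( u − d·E_F[min{x, 1−x}] − κ·( E_F[c(x)] − c(μ) ) ). Then V*(μ) > 0 for every μ ∈ [0,1], and moreover inf_{μ ∈ [0,1]} V*(μ) > 0; consequently there exists ε > 0 such that the contract (u − ε, d) satisfies (u − ε) − d/2 < 0 (so the uninformed maxmin Bob rejects, since his best mixed announcement yields (u − ε) − d/2) while the informed Bob's value (u − ε supplemented by optimal learning) is strictly positive at every prior μ ∈ [0,1]. -/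
/-!
Let `t` be the tangent line of `c` at `1/2`. Near `μ = 1/2`, Bob can split his prior into the
posteriors `1/2 ± δ`: this lowers his expected penalty by `d δ`, while the information cost is at
most the expected gap `c - t` at those posteriors (because `c μ ≥ t μ` and `t` is affine), which is
`o(δ)` by differentiability at `1/2`. Away from `1/2` he does not learn and already expects a
penalty of at most `d (1/2 - δ)`. Either way his value exceeds `u - d/2` by a fixed margin.
-/

open scoped BigOperators

/-- The informed Bob's value at prior `μ` under contract `(u, d)` with posterior-separable
cost `κ·(E_F[c] − c(μ))`: the supremum over finitely supported Bayes-plausible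
distributions of posteriors `F` (support points `x i ∈ [0,1]`, weights `p i`, mean `μ`)
of `u − d·E_F[min{x, 1−x}] − κ·(E_F[c(x)] − c(μ))`. -/
noncomputable def informedValue (u d κ : ℝ) (c : ℝ → ℝ) (μ : ℝ) : ℝ :=
  sSup {v : ℝ | ∃ (k : ℕ) (p x : Fin k → ℝ),
    (∀ i, 0 ≤ p i) ∧ (∑ i, p i) = 1 ∧ (∀ i, x i ∈ Set.Icc (0 : ℝ) 1) ∧
    (∑ i, p i * x i) = μ ∧
    v = u - d * (∑ i, p i * min (x i) (1 - x i)) -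
        κ * ((∑ i, p i * c (x i)) - c μ)}

open Set Filter Topology

noncomputable def tangentGap (f : ℝ → ℝ) (x₀ y : ℝ) : ℝ :=
  f y - f x₀ - deriv f x₀ * (y - x₀)

theorem ConvexOn.tangentGap_nonneg {S : Set ℝ} {f : ℝ → ℝ} {x₀ y : ℝ} (hf : ConvexOn ℝ S f)
    (hx₀ : x₀ ∈ S) (hy : y ∈ S) (hfx₀ : DifferentiableAt ℝ f x₀) : 0 ≤ tangentGap f x₀ y := by
  unfold tangentGap
  rcases lt_trichotomy x₀ y with hlt | rfl | hgt
  · have h := hf.deriv_le_slope hx₀ hy hlt hfx₀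
    rw [slope_def_field, le_div_iff₀ (sub_pos.2 hlt)] at h
    linarith
  · simp
  · have h := hf.slope_le_deriv hy hx₀ hgt hfx₀
    rw [slope_def_field, div_le_iff₀ (sub_pos.2 hgt)] at h
    linarith

theorem ConvexOn.sum_mul_sub_le_sum_mul_tangentGap {S : Set ℝ} {f : ℝ → ℝ} {x₀ : ℝ}
    (hf : ConvexOn ℝ S f) (hx₀ : x₀ ∈ S) (hfx₀ : DifferentiableAt ℝ f x₀) {ι : Type*}
    {s : Finset ι} {p x : ι → ℝ} (hp : ∀ i ∈ s, 0 ≤ p i) (hp1 : ∑ i ∈ s, p i = 1)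
    (hx : ∀ i ∈ s, x i ∈ S) :
    ∑ i ∈ s, p i * f (x i) - f (∑ i ∈ s, p i * x i) ≤ ∑ i ∈ s, p i * tangentGap f x₀ (x i) := by
  have hmean : ∑ i ∈ s, p i * x i ∈ S := hf.1.sum_mem hp hp1 hx
  have hexpand : ∑ i ∈ s, p i * tangentGap f x₀ (x i) =
      ∑ i ∈ s, p i * f (x i) - f x₀ - deriv f x₀ * (∑ i ∈ s, p i * x i - x₀) := by
    simp only [tangentGap, mul_sub, Finset.sum_sub_distrib, ← Finset.sum_mul, hp1,
      Finset.mul_sum, mul_left_comm]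
    ring
  have := hf.tangentGap_nonneg hx₀ hmean hfx₀
  unfold tangentGap at this
  linarith

theorem DifferentiableAt.eventually_tangentGap_le {f : ℝ → ℝ} {x₀ ε : ℝ}
    (hf : DifferentiableAt ℝ f x₀) (hε : 0 < ε) :
    ∀ᶠ δ in 𝓝[>] (0 : ℝ), tangentGap f x₀ (x₀ + δ) ≤ ε * δ ∧ tangentGap f x₀ (x₀ - δ) ≤ ε * δ := by
  have hsmall := (hasDerivAt_iff_isLittleO.1 hf.hasDerivAt).def hε
  have hplus : Tendsto (fun δ : ℝ => x₀ + δ) (𝓝[>] 0) (𝓝 x₀) :=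
    tendsto_nhdsWithin_of_tendsto_nhds (by simpa using (continuous_const_add x₀).tendsto 0)
  have hminus : Tendsto (fun δ : ℝ => x₀ - δ) (𝓝[>] 0) (𝓝 x₀) :=
    tendsto_nhdsWithin_of_tendsto_nhds (by simpa using (continuous_sub_left x₀).tendsto 0)
  filter_upwards [hplus.eventually hsmall, hminus.eventually hsmall, self_mem_nhdsWithin]
    with δ hfwd hbwd (hδ : 0 < δ)
  simp only [Real.norm_eq_abs, smul_eq_mul, add_sub_cancel_left, sub_sub_cancel_left, abs_neg,
    abs_of_nonneg hδ.le] at hfwd hbwd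
  simp only [tangentGap, add_sub_cancel_left, sub_sub_cancel_left]
  constructor
  · linarith [le_abs_self (f (x₀ + δ) - f x₀ - δ * deriv f x₀)]
  · linarith [le_abs_self (f (x₀ - δ) - f x₀ - -δ * deriv f x₀)]

section InformedValue

variable {u d κ μ : ℝ} {c : ℝ → ℝ}

theorem le_informedValue (hc : ConvexOn ℝ (Icc 0 1) c) (hd : 0 ≤ d) (hκ : 0 ≤ κ) {k : ℕ}
    {p x : Fin k → ℝ} (hp : ∀ i, 0 ≤ p i) (hp1 : ∑ i, p i = 1) (hx : ∀ i, x i ∈ Icc 0 1)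
    (hμ : ∑ i, p i * x i = μ) :
    u - d * (∑ i, p i * min (x i) (1 - x i)) - κ * ((∑ i, p i * c (x i)) - c μ) ≤
      informedValue u d κ c μ := by
  refine le_csSup ⟨u, ?_⟩ ⟨k, p, x, hp, hp1, hx, hμ, rfl⟩
  rintro _ ⟨k, p, x, hp, hp1, hx, rfl, rfl⟩
  have hpenalty : 0 ≤ ∑ i, p i * min (x i) (1 - x i) :=
    Finset.sum_nonneg fun i _ => mul_nonneg (hp i) (le_min (hx i).1 (sub_nonneg.2 (hx i).2))
  have hjensen : c (∑ i, p i * x i) ≤ ∑ i, p i * c (x i) :=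
    hc.map_sum_le (fun i _ => hp i) hp1 (fun i _ => hx i)
  linarith [mul_nonneg hd hpenalty, mul_nonneg hκ (sub_nonneg.2 hjensen)]

theorem sub_mul_min_le_informedValue (hc : ConvexOn ℝ (Icc 0 1) c) (hd : 0 ≤ d) (hκ : 0 ≤ κ)
    (hμ : μ ∈ Icc 0 1) : u - d * min μ (1 - μ) ≤ informedValue u d κ c μ := by
  simpa using le_informedValue (k := 1) (p := fun _ => 1) (x := fun _ => μ) (u := u) (μ := μ)
    hc hd hκ (fun _ => zero_le_one) (by simp) (fun _ => hμ) (by simp)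

theorem sub_sub_le_informedValue_of_forall_le (hc : ConvexOn ℝ (Icc 0 1) c)
    (hc' : DifferentiableAt ℝ c (1 / 2)) (hd : 0 ≤ d) (hκ : 0 ≤ κ) {k : ℕ} {p x : Fin k → ℝ}
    (hp : ∀ i, 0 ≤ p i) (hp1 : ∑ i, p i = 1) (hx : ∀ i, x i ∈ Icc 0 1)
    (hμ : ∑ i, p i * x i = μ) {m η : ℝ} (hmin : ∀ i, min (x i) (1 - x i) ≤ m)
    (hgap : ∀ i, tangentGap c (1 / 2) (x i) ≤ η) :
    u - d * m - κ * η ≤ informedValue u d κ c μ := by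
  have hweighted : ∀ {g : ℝ → ℝ} {b : ℝ}, (∀ i, g (x i) ≤ b) → ∑ i, p i * g (x i) ≤ b :=
    fun hg => calc
      _ ≤ ∑ i, p i * _ := Finset.sum_le_sum fun i _ => mul_le_mul_of_nonneg_left (hg i) (hp i)
      _ = _ := by rw [← Finset.sum_mul, hp1, one_mul]
  have hpenalty := hweighted (g := fun y => min y (1 - y)) hmin
  have hcost : ∑ i, p i * c (x i) - c μ ≤ η := by
    rw [← hμ]
    exact (hc.sum_mul_sub_le_sum_mul_tangentGap (by norm_num) hc' (fun i _ => hp i) hp1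
      (fun i _ => hx i)).trans (hweighted hgap)
  calc u - d * m - κ * η
      ≤ u - d * (∑ i, p i * min (x i) (1 - x i)) - κ * ((∑ i, p i * c (x i)) - c μ) := by
        gcongr
    _ ≤ informedValue u d κ c μ := le_informedValue hc hd hκ hp hp1 hx hμ

theorem sub_half_add_mul_sub_mul_le_informedValue (hc : ConvexOn ℝ (Icc 0 1) c)
    (hc' : DifferentiableAt ℝ c (1 / 2)) (hd : 0 ≤ d) (hκ : 0 ≤ κ) {δ η : ℝ} (hδ : 0 ≤ δ)
    (hδ' : δ ≤ 1 / 2) (hright : tangentGap c (1 / 2) (1 / 2 + δ) ≤ η)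
    (hleft : tangentGap c (1 / 2) (1 / 2 - δ) ≤ η) (hμ : μ ∈ Icc 0 1) :
    u - d / 2 + d * δ - κ * η ≤ informedValue u d κ c μ := by
  by_cases hfar : δ ≤ |μ - 1 / 2|
  · have hη : 0 ≤ η :=
      (hc.tangentGap_nonneg (by norm_num) ⟨by linarith, by linarith⟩ hc').trans hright
    have hmin : min μ (1 - μ) ≤ 1 / 2 - δ := by
      rcases le_abs'.1 hfar with h | h
      · exact (min_le_left _ _).trans (by linarith)
      · exact (min_le_right _ _).trans (by linarith)
    calc u - d / 2 + d * δ - κ * η ≤ u - d * min μ (1 - μ) := by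
          nlinarith [mul_le_mul_of_nonneg_left hmin hd, mul_nonneg hκ hη]
      _ ≤ informedValue u d κ c μ := sub_mul_min_le_informedValue hc hd hκ hμ
  · obtain ⟨qL, qR, hqL, hqR, hq, hmean⟩ : μ ∈ segment ℝ (1 / 2 - δ) (1 / 2 + δ) := by
      rw [segment_eq_Icc (by linarith)]
      have := abs_lt.1 (not_le.1 hfar)
      constructor <;> linarith
    have hleftMem : 1 / 2 - δ ∈ Icc (0 : ℝ) 1 := ⟨by linarith, by linarith⟩
    have hrightMem : 1 / 2 + δ ∈ Icc (0 : ℝ) 1 := ⟨by linarith, by linarith⟩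
    have hsplit := sub_sub_le_informedValue_of_forall_le (u := u) (μ := μ) (m := 1 / 2 - δ)
      (η := η) (p := ![qL, qR]) (x := ![1 / 2 - δ, 1 / 2 + δ]) hc hc' hd hκ
      (Fin.forall_fin_two.2 ⟨hqL, hqR⟩) (by simpa using hq)
      (Fin.forall_fin_two.2 ⟨hleftMem, hrightMem⟩)
      (by simpa using hmean)
      (Fin.forall_fin_two.2 ⟨min_le_left _ _,
        (min_le_right _ _).trans_eq (by ring : 1 - (1 / 2 + δ) = 1 / 2 - δ)⟩)
      (Fin.forall_fin_two.2 ⟨hleft, hright⟩)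
    linarith

theorem exists_pos_forall_sub_half_add_le_informedValue (hc : ConvexOn ℝ (Icc 0 1) c)
    (hc' : DifferentiableAt ℝ c (1 / 2)) (hd : 0 < d) (hκ : 0 < κ) :
    ∃ b > 0, ∀ u, ∀ μ ∈ Icc (0 : ℝ) 1, u - d / 2 + b ≤ informedValue u d κ c μ := by
  obtain ⟨δ, ⟨hright, hleft⟩, hδ, hδ'⟩ :=
    ((hc'.eventually_tangentGap_le (ε := d / (2 * κ)) (by positivity)).and
      (Ioc_mem_nhdsGT (by norm_num : (0 : ℝ) < 1 / 2))).exists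
  refine ⟨d * δ / 2, by positivity, fun u μ hμ => ?_⟩
  have hmargin : κ * (d / (2 * κ) * δ) = d * δ / 2 := by field_simp
  linarith [sub_half_add_mul_sub_mul_le_informedValue (u := u) hc hc' hd.le hκ.le hδ.le hδ'
    hright hleft hμ]

end InformedValue

theorem posterior_separable_screening_general
    (c : ℝ → ℝ) (hc : ConvexOn ℝ (Set.Icc (0 : ℝ) 1) c)
    (hdiff : DifferentiableAt ℝ c (1 / 2))
    (d κ u : ℝ) (hd : 0 < d) (hκ : 0 < κ) (hu : u = d / 2) :
    (∀ μ ∈ Set.Icc (0 : ℝ) 1, 0 < informedValue u d κ c μ) ∧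
    (∃ b > (0 : ℝ), ∀ μ ∈ Set.Icc (0 : ℝ) 1, b ≤ informedValue u d κ c μ) ∧
    (∃ ε > (0 : ℝ), (u - ε) - d / 2 < 0 ∧
      ∀ μ ∈ Set.Icc (0 : ℝ) 1, 0 < informedValue (u - ε) d κ c μ) := by
  obtain ⟨b, hb, hgain⟩ := exists_pos_forall_sub_half_add_le_informedValue hc hdiff hd hκ
  have hbound : ∀ μ ∈ Icc (0 : ℝ) 1, b ≤ informedValue u d κ c μ := fun μ hμ => by
    linarith [hgain u μ hμ]
  refine ⟨fun μ hμ => hb.trans_le (hbound μ hμ), ⟨b, hb, hbound⟩, b / 2, by positivity,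
    by linarith, fun μ hμ => ?_⟩
  linarith [hgain (u - b / 2) μ hμ]

/-- With `u = d/2` the informed value is strictly positive at every prior, indeed bounded
below by some `b > 0` uniformly in the prior; hence for some `ε > 0` the contract
`(u − ε, d)` gives the maxmin uninformed Bob `(u − ε) − d/2 < 0` (his best mixed
announcement) while the informed value stays strictly positive at every prior. -/
theorem posterior_separable_screening
    (c : ℝ → ℝ) (hc : ConvexOn ℝ (Set.Icc (0 : ℝ) 1) c)
    (hcont : ContinuousOn c (Set.Icc (0 : ℝ) 1))
    (hdiff : DifferentiableAt ℝ c (1 / 2))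
    (d κ u : ℝ) (hd : 0 < d) (hκ : 0 < κ) (hu : u = d / 2) :
    (∀ μ ∈ Set.Icc (0 : ℝ) 1, 0 < informedValue u d κ c μ) ∧
    (∃ b > (0 : ℝ), ∀ μ ∈ Set.Icc (0 : ℝ) 1, b ≤ informedValue u d κ c μ) ∧
    (∃ ε > (0 : ℝ), (u - ε) - d / 2 < 0 ∧
      ∀ μ ∈ Set.Icc (0 : ℝ) 1, 0 < informedValue (u - ε) d κ c μ) :=
  posterior_separable_screening_general c hc hdiff d κ u hd hκ hu
end

section
/- Let Θ be a finite set with n := |Θ| ≥ 2, let ρ ∈ Δ(Θ) with ρ(θ) > 0 for all θ, let 𝓔 be a set of experiments, and let C : 𝓔 × Δ(Θ) → [0,∞]. Suppose Assumption (A') holds: there exist ε > 0, η > 0 and T ≥ 0 such that for every μ ∈ Δ(Θ) with ‖μ − ρ‖ < η there exists E_μ = (S, χ) ∈ 𝓔 with Υ^ρ(E_μ, μ) := min_θ (μ(θ)/ρ(θ)) − Σ_{s∈S} min_θ ( μ(θ)·χ(θ)(s)/ρ(θ) ) > ε and C(E_μ, μ) ≤ T. Then there exist u > 0, κ > 0 and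 the generalized contract with d(θ) := κ/ρ(θ) such that: (i) for every μ ∈ Δ(Θ), max( u − min_θ μ(θ)·d(θ), sup_{E=(S,χ)∈𝓔} ( u − Σ_{s∈S} min_θ ( μ(θ)·χ(θ)(s)·d(θ) ) − C(E, μ) ) ) ≥ 0, so every informed Bob accepts; and (ii) u − κ < 0, so the subjective-expected-utility uninformed Bob with prior ρ, whose best payoff is max_θ ( u − ρ(θ)·d(θ) ) = u − κ, strictly prefers to reject. -/
/-! With penalties `d(θ) = κ/ρ(θ)`, every payoff of an informed Bob is `u` minus `κ` times a
likelihood ratio: `min_θ μ(θ)/ρ(θ)` if he does not learn, and that minimum lowered by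
`Υ^ρ(E, μ)` if he learns via `E`. The minimum never exceeds `1`, and it is at most `1 - c` once
`μ` is at distance `√n · c` from `ρ`. So a Bob far from `ρ` expects to pay at most `κ(1 - c)`,
while a Bob near `ρ` can learn at cost at most `T` and then expects to pay at most `κ(1 - ε)`.
Taking `κ · min(ε, c) ≥ T + 1` and `u = κ - 1` makes all informed Bobs accept, while the
uninformed Bob, who expects to pay exactly `κ`, gets `-1`. -/

open scoped BigOperators ENNReal

/-- The `ρ`-weighted value of learning:
`Υ^ρ(E, μ) = min_θ (μ(θ)/ρ(θ)) − Σ_s min_θ (μ(θ)·χ(θ)(s)/ρ(θ))`. -/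
noncomputable def UpsilonRho {Θ : Type} [Fintype Θ] (ρ : Θ → ℝ)
    (E : Experiment Θ) (μ : Θ → ℝ) : ℝ :=
  (⨅ θ, μ θ / ρ θ) - ∑ s, ⨅ θ, μ θ * E.χ θ s / ρ θ

open Finset

section Distributions

variable {Θ : Type} [Fintype Θ] {μ ρ : Θ → ℝ}

theorem IsDist.nonempty_s12 (hμ : IsDist μ) : Nonempty Θ := by
  by_contra h
  have := hμ.2
  simp [not_nonempty_iff.mp h] at this

theorem IsDist.le_one (hμ : IsDist μ) (θ : Θ) : μ θ ≤ 1 :=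
  hμ.2 ▸ single_le_sum (fun θ' _ => hμ.1 θ') (mem_univ θ)

theorem iInf_div_le_one (hμ : IsDist μ) (hρ : IsDist ρ) (hρpos : ∀ θ, 0 < ρ θ) :
    (⨅ θ, μ θ / ρ θ) ≤ 1 := by
  have := hρ.nonempty_s12
  obtain ⟨θ, -, hθ⟩ := exists_le_of_sum_le univ_nonempty (hμ.2.trans hρ.2.symm).le
  exact (ciInf_le (Finite.bddBelow_range _) θ).trans ((div_le_one (hρpos θ)).mpr hθ)

theorem abs_sub_lt_of_forall_one_sub_lt_div (hμ : IsDist μ) (hρ : IsDist ρ)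
    (hρpos : ∀ θ, 0 < ρ θ) {c : ℝ} (hc : 0 < c) (h : ∀ θ, 1 - c < μ θ / ρ θ) (θ : Θ) :
    |μ θ - ρ θ| < c := by
  classical
  have hlow : ∀ θ, (1 - c) * ρ θ < μ θ := fun θ => (lt_div_iff₀ (hρpos θ)).mp (h θ)
  have hrest : (1 - c) * ∑ θ' ∈ univ.erase θ, ρ θ' ≤ ∑ θ' ∈ univ.erase θ, μ θ' := by
    rw [mul_sum]
    exact sum_le_sum fun θ' _ => (hlow θ').le
  rw [sum_erase_eq_sub (mem_univ θ), sum_erase_eq_sub (mem_univ θ), hρ.2, hμ.2] at hrest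
  have := hlow θ
  have := hρ.le_one θ
  have := hρpos θ
  rw [abs_sub_lt_iff]
  constructor <;> nlinarith

theorem euclDist_lt_of_forall_abs_sub_lt [Nonempty Θ] {ν : Θ → ℝ} {c : ℝ} (hc : 0 ≤ c)
    (h : ∀ θ, |μ θ - ν θ| < c) : euclDist μ ν < √(Fintype.card Θ) * c := by
  have hsq : ∑ θ, (μ θ - ν θ) ^ 2 < ∑ _θ : Θ, c ^ 2 :=
    sum_lt_sum_of_nonempty univ_nonempty fun θ _ => sq_lt_sq' (abs_lt.mp (h θ)).1 (abs_lt.mp (h θ)).2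
  rw [sum_const, card_univ, nsmul_eq_mul] at hsq
  calc euclDist μ ν < √(Fintype.card Θ * c ^ 2) := Real.sqrt_lt_sqrt (by positivity) hsq
    _ = √(Fintype.card Θ) * c := by rw [Real.sqrt_mul (by positivity), Real.sqrt_sq hc]

theorem iInf_div_le_one_sub_of_le_euclDist (hμ : IsDist μ) (hρ : IsDist ρ)
    (hρpos : ∀ θ, 0 < ρ θ) {c : ℝ} (hc : 0 < c) (hfar : √(Fintype.card Θ) * c ≤ euclDist μ ρ) :
    (⨅ θ, μ θ / ρ θ) ≤ 1 - c := by
  have := hρ.nonempty_s12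
  by_contra! hnear
  have h θ : 1 - c < μ θ / ρ θ := hnear.trans_le (ciInf_le (Finite.bddBelow_range _) θ)
  exact hfar.not_gt <| euclDist_lt_of_forall_abs_sub_lt hc.le
    (abs_sub_lt_of_forall_one_sub_lt_div hμ hρ hρpos hc h)

end Distributions

theorem iInf_mul_div_eq_mul_iInf_div {ι : Type*} (g ρ : ι → ℝ) {κ : ℝ} (hκ : 0 ≤ κ) :
    (⨅ i, g i * (κ / ρ i)) = κ * ⨅ i, g i / ρ i := by
  rw [Real.mul_iInf_of_nonneg hκ]
  exact iInf_congr fun i => by ring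

theorem sum_iInf_mul_div_eq_mul_sub_upsilonRho {Θ : Type} [Fintype Θ] (ρ : Θ → ℝ)
    (E : Experiment Θ) (μ : Θ → ℝ) {κ : ℝ} (hκ : 0 ≤ κ) :
    (∑ s, ⨅ θ, μ θ * E.χ θ s * (κ / ρ θ)) = κ * ((⨅ θ, μ θ / ρ θ) - UpsilonRho ρ E μ) := by
  simp only [iInf_mul_div_eq_mul_iInf_div _ ρ hκ, ← mul_sum, UpsilonRho, sub_sub_cancel]

theorem generalized_contract_screens_general
    {Θ : Type} [Fintype Θ]
    (ρ : Θ → ℝ) (hρ : IsDist ρ) (hρpos : ∀ θ, 0 < ρ θ)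
    (ℰ : Set (Experiment Θ)) (C : Experiment Θ → (Θ → ℝ) → ℝ≥0∞)
    (hA : ∃ ε > (0 : ℝ), ∃ η > (0 : ℝ), ∃ T : ℝ, 0 ≤ T ∧
      ∀ μ : Θ → ℝ, IsDist μ → euclDist μ ρ < η →
        ∃ E ∈ ℰ, UpsilonRho ρ E μ > ε ∧ C E μ ≤ ENNReal.ofReal T) :
    ∃ u > (0 : ℝ), ∃ κ > (0 : ℝ),
      (∀ μ : Θ → ℝ, IsDist μ →
        (0 ≤ u - ⨅ θ, μ θ * (κ / ρ θ)) ∨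
        (∃ E ∈ ℰ, C E μ ≠ ⊤ ∧
          0 ≤ u - (∑ s, ⨅ θ, μ θ * E.χ θ s * (κ / ρ θ)) - (C E μ).toReal)) ∧
      (⨆ θ, u - ρ θ * (κ / ρ θ)) = u - κ ∧ u - κ < 0 := by
  have := hρ.nonempty_s12
  obtain ⟨ε, hε, η, hη, T, hT, hA⟩ := hA
  set c := η / √(Fintype.card Θ)
  have hc : 0 < c := by positivity
  set γ := min ε c
  have hγ : 0 < γ := lt_min hε hc
  set κ := (T + 1) / γ + 1
  have hκγ : T + 1 ≤ κ * γ := by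
    rw [add_mul, div_mul_cancel₀ _ hγ.ne']
    linarith
  refine ⟨κ - 1, by simp only [κ, add_sub_cancel_right]; positivity, κ, by positivity,
    fun μ hμ => ?_, ?_, by linarith⟩
  · by_cases hnear : euclDist μ ρ < η
    · obtain ⟨E, hE, hΥ, hC⟩ := hA μ hμ hnear
      have hm := iInf_div_le_one hμ hρ hρpos
      refine .inr ⟨E, hE, ne_top_of_le_ne_top ENNReal.ofReal_ne_top hC, ?_⟩
      have hcost := ENNReal.toReal_le_of_le_ofReal hT hC
      have hgain : κ * γ ≤ κ * UpsilonRho ρ E μ := by gcongr; exact (min_le_left _ _).trans hΥ.le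
      rw [sum_iInf_mul_div_eq_mul_sub_upsilonRho ρ E μ (by positivity)]
      nlinarith
    · have hfar : √(Fintype.card Θ) * c ≤ euclDist μ ρ := by
        rw [mul_div_cancel₀ _ (by positivity)]
        exact not_lt.mp hnear
      have hm := iInf_div_le_one_sub_of_le_euclDist hμ hρ hρpos hc hfar
      have hγc : κ * γ ≤ κ * c := by gcongr; exact min_le_right _ _
      refine .inl ?_
      rw [iInf_mul_div_eq_mul_iInf_div μ ρ (by positivity)]
      nlinarith
  · simp only [mul_div_cancel₀ _ (hρpos _).ne', ciSup_const]

/-- Under Assumption (A') there is a generalized contract `(u, d(·))` with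
`d(θ) = κ/ρ(θ)` that screens the SEU uninformed Bob with prior `ρ`:
(i) every informed Bob accepts (without learning, or via an affordable experiment);
(ii) the uninformed Bob's best payoff is `u − κ < 0`, so he strictly rejects. -/
theorem generalized_contract_screens
    {Θ : Type} [Fintype Θ] (hn : 2 ≤ Fintype.card Θ)
    (ρ : Θ → ℝ) (hρ : IsDist ρ) (hρpos : ∀ θ, 0 < ρ θ)
    (ℰ : Set (Experiment Θ)) (C : Experiment Θ → (Θ → ℝ) → ℝ≥0∞)
    (hA : ∃ ε > (0 : ℝ), ∃ η > (0 : ℝ), ∃ T : ℝ, 0 ≤ T ∧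
      ∀ μ : Θ → ℝ, IsDist μ → euclDist μ ρ < η →
        ∃ E ∈ ℰ, UpsilonRho ρ E μ > ε ∧ C E μ ≤ ENNReal.ofReal T) :
    ∃ u > (0 : ℝ), ∃ κ > (0 : ℝ),
      (∀ μ : Θ → ℝ, IsDist μ →
        (0 ≤ u - ⨅ θ, μ θ * (κ / ρ θ)) ∨
        (∃ E ∈ ℰ, C E μ ≠ ⊤ ∧
          0 ≤ u - (∑ s, ⨅ θ, μ θ * E.χ θ s * (κ / ρ θ)) - (C E μ).toReal)) ∧
      (⨆ θ, u - ρ θ * (κ / ρ θ)) = u - κ ∧ u - κ < 0 :=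
  generalized_contract_screens_general ρ hρ hρpos ℰ C hA
end
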